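/- Let p ∈ [1,∞] and suppose the difference-delay system is L^p exponentially stable with constants C₀ > 0, γ > 0, i.e. every solution z with initial condition φ ∈ L^p([−η_M,0],ℝ^d) satisfies ‖z(t+·)‖_{L^p([−η_M,0],ℝ^d)} ≤ C₀ e^{−γ t} ‖φ‖_{L^p([−η_M,0],ℝ^d)} for all t ≥ 0. Let (M_q)_{q≥1} be any family of maps in L^∞_loc(ℝ,ℝ^{d×d}) such that M_q(t) = 0 for t ∉ (σ_q − η_M, σ_q] and such that for every φ ∈ L^p([−η_M,0],ℝ^d) the corresponding solution satisfies z(t) = Σ_{q=1}^∞ M_q(t) φ(t − σ_q) for a.e. t ≥ 0. Then for every q ≥ 1, the spectral norm satisfies ‖M_q(s)‖ ≤ C₀ e^{−γ s} for a.e. s > 0. -/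

import Mathlib

/-!
Test the system with the initial condition `φ θ = 1_E (σ_q + θ) v`, where `E` lies in
`(0, ∞) ∩ (σ_q - η_M, σ_q]` and is shorter than the gaps between `σ_q` and the other `σ_{q'}`.
Such a solution exists by the method of steps, and on `E` the representation formula collapses
to `z t = M_q(t) v`. As `E` is a piece of the window `σ_q + [-η_M, 0]`, stability gives
`‖M_q(·) v‖_{L^p(E)} ≤ C₀ e^{-γ σ_q} |v| |E|^{1/p}`; since `E` is arbitrary, this is the pointwise
bound `|M_q(s) v| ≤ C₀ e^{-γ σ_q} |v| ≤ C₀ e^{-γ s} |v|` for a.e. `s`, and a countable dense set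
of vectors `v` turns it into the bound on the spectral norm.
-/

open MeasureTheory Matrix Filter Set
open scoped ENNReal

/-- Euclidean norm of a vector in `ℝ^ι`. -/
noncomputable def euclNorm {ι : Type*} [Fintype ι] (x : ι → ℝ) : ℝ :=
  Real.sqrt (∑ j, (x j) ^ 2)

/-- `z` belongs to `L^p_loc([-ηM, ∞), ℝ^d)` and satisfies the time-varying difference-delay
system `z(t) = ∑ i, D i (t) * z (t - η i)` for a.e. `t ≥ 0` (`ηM` is the largest delay;
the values of `z` on `[-ηM, 0]` are its initial condition). -/
def DelaySol (d M : ℕ) (η : Fin M → ℝ) (D : Fin M → ℝ → Matrix (Fin d) (Fin d) ℝ)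
    (ηM : ℝ) (p : ℝ≥0∞) (z : ℝ → Fin d → ℝ) : Prop :=
  (∀ b : ℝ, MemLp z p (volume.restrict (Set.Icc (-ηM) b))) ∧
  (∀ᵐ t ∂(volume.restrict (Set.Ici (0 : ℝ))), z t = ∑ i, (D i t).mulVec (z (t - η i)))

/-- `L^p` exponential stability of the difference-delay system. -/
def DelayLpStable (d M : ℕ) (η : Fin M → ℝ) (D : Fin M → ℝ → Matrix (Fin d) (Fin d) ℝ)
    (ηM : ℝ) (p : ℝ≥0∞) : Prop :=
  ∃ C > (0 : ℝ), ∃ γ > (0 : ℝ), ∀ z, DelaySol d M η D ηM p z → ∀ t ≥ (0 : ℝ),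
    eLpNorm (fun θ => euclNorm (z (t + θ))) p (volume.restrict (Set.Icc (-ηM) 0)) ≤
      ENNReal.ofReal (C * Real.exp (-γ * t)) *
        eLpNorm (fun θ => euclNorm (z θ)) p (volume.restrict (Set.Icc (-ηM) 0))

/-- `C⁰` exponential stability of the difference-delay system: continuous solutions
(the equation holding for all `t ≥ 0` forces the compatibility condition at `t = 0`). -/
def DelayC0Stable (d M : ℕ) (η : Fin M → ℝ) (D : Fin M → ℝ → Matrix (Fin d) (Fin d) ℝ)
    (ηM : ℝ) : Prop :=
  ∃ C > (0 : ℝ), ∃ γ > (0 : ℝ), ∀ z : ℝ → Fin d → ℝ,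
    ContinuousOn z (Set.Ici (-ηM)) →
    (∀ t ≥ (0 : ℝ), z t = ∑ i, (D i t).mulVec (z (t - η i))) →
    ∀ t ≥ (0 : ℝ), ∀ θ ∈ Set.Icc (-ηM) (0 : ℝ),
      euclNorm (z (t + θ)) ≤ C * Real.exp (-γ * t) *
        ⨆ θ' : Set.Icc (-ηM) (0 : ℝ), euclNorm (z (θ' : ℝ))

/-- Spectral norm of a real matrix: the operator norm with respect to the Euclidean norm. -/
noncomputable def specNorm {ι : Type*} [Fintype ι] [DecidableEq ι] (B : Matrix ι ι ℝ) : ℝ :=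
  ‖Matrix.toEuclideanCLM (𝕜 := ℝ) B‖


lemma euclNorm_eq_norm_toLp {ι : Type*} [Fintype ι] (x : ι → ℝ) :
    euclNorm x = ‖WithLp.toLp 2 x‖ := by
  simp [euclNorm, EuclideanSpace.norm_eq, Real.norm_eq_abs, sq_abs]

lemma norm_mulVec_le_of_abs_le {m n : Type*} [Fintype m] [Fintype n] {A : Matrix m n ℝ}
    {B : ℝ} (hB : 0 ≤ B) (hA : ∀ k l, |A k l| ≤ B) (v : n → ℝ) :
    ‖A *ᵥ v‖ ≤ Fintype.card n * B * ‖v‖ := by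
  refine (pi_norm_le_iff_of_nonneg (by positivity)).2 fun k => ?_
  calc ‖(A *ᵥ v) k‖ = ‖∑ l, A k l * v l‖ := rfl
    _ ≤ ∑ l, ‖A k l * v l‖ := norm_sum_le _ _
    _ ≤ ∑ _l : n, B * ‖v‖ := Finset.sum_le_sum fun l _ => by
      rw [norm_mul]
      exact mul_le_mul (hA k l) (norm_le_pi_norm v l) (norm_nonneg _) hB
    _ = Fintype.card n * B * ‖v‖ := by simp [mul_assoc]

lemma Measurable.matrix_mulVec {α m n : Type*} [MeasurableSpace α] [Fintype n]
    {A : α → Matrix m n ℝ} {v : α → n → ℝ} (hA : ∀ k l, Measurable fun a => A a k l)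
    (hv : Measurable v) : Measurable fun a => A a *ᵥ v a :=
  measurable_pi_iff.2 fun k =>
    Finset.measurable_sum _ fun l _ => (hA k l).mul ((measurable_pi_apply l).comp hv)

lemma exists_pos_forall_le_of_pos {ι : Type*} [Finite ι] {f : ι → ℝ} (hf : ∀ i, 0 < f i) :
    ∃ e > 0, ∀ i, e ≤ f i := by
  rcases isEmpty_or_nonempty ι with _ | _
  · exact ⟨1, one_pos, isEmptyElim⟩
  · obtain ⟨i₀, hi₀⟩ := Finite.exists_min f
    exact ⟨f i₀, hf i₀, hi₀⟩

lemma StrictMono.exists_pos_le_abs_sub {σ : ℕ → ℝ} (hσ : StrictMono σ) (q : ℕ) :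
    ∃ g > 0, ∀ q' ≠ q, g ≤ |σ q' - σ q| := by
  have hup : ∀ q', q < q' → σ (q + 1) - σ q ≤ |σ q' - σ q| := fun q' h =>
    (sub_le_sub_right (hσ.monotone h) _).trans (le_abs_self _)
  rcases q with _ | q
  · refine ⟨σ 1 - σ 0, sub_pos.2 (hσ zero_lt_one), fun q' hq' => hup q' (Nat.pos_of_ne_zero hq')⟩
  · refine ⟨min (σ (q + 2) - σ (q + 1)) (σ (q + 1) - σ q),
      lt_min (sub_pos.2 (hσ (by omega))) (sub_pos.2 (hσ (by omega))), fun q' hq' => ?_⟩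
    rcases hq'.lt_or_gt with h | h
    · have hle : σ q' ≤ σ q := hσ.monotone (Nat.lt_succ_iff.1 h)
      rw [abs_sub_comm, abs_of_pos (sub_pos.2 (hσ h))]
      exact (min_le_right _ _).trans (by linarith)
    · exact (min_le_left _ _).trans (hup q' h)

lemma exists_nonneg_ae_forall_abs_le {ι α m n : Type*} [Finite ι] [MeasurableSpace α]
    {μ : Measure α} {A : ι → α → Matrix m n ℝ}
    (hA : ∀ i, ∃ B : ℝ, ∀ᵐ a ∂μ, ∀ k l, |A i a k l| ≤ B) :
    ∃ B : ℝ, 0 ≤ B ∧ ∀ᵐ a ∂μ, ∀ i k l, |A i a k l| ≤ B := by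
  choose B hB using hA
  obtain ⟨B', hB'⟩ := Finite.exists_le B
  refine ⟨max B' 0, le_max_right _ _, ?_⟩
  filter_upwards [ae_all_iff.2 hB] with a ha i k l
  exact (ha i k l).trans ((hB' i).trans (le_max_left _ _))

theorem ae_restrict_enorm_le_of_forall_eLpNorm_le {α E : Type*} [MeasurableSpace α]
    {μ : Measure α} [SigmaFinite μ] [NormedAddCommGroup E] {f : α → E} {p : ℝ≥0∞} (hp : p ≠ 0)
    {A : Set α} (hA : MeasurableSet A) (hf : AEStronglyMeasurable f (μ.restrict A)) {K : ℝ≥0∞}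
    (h : ∀ F, MeasurableSet F → F ⊆ A → eLpNorm f p (μ.restrict F) ≤ K * μ F ^ (1 / p.toReal)) :
    ∀ᵐ x ∂μ.restrict A, ‖f x‖ₑ ≤ K := by
  rcases eq_or_ne p ∞ with rfl | hp_top
  · have hA' := h A hA le_rfl
    simp only [ENNReal.toReal_top, div_zero, ENNReal.rpow_zero, mul_one,
      eLpNorm_exponent_top] at hA'
    exact (enorm_ae_le_eLpNormEssSup f _).mono fun x hx => hx.trans hA'
  have hp_pos : 0 < p.toReal := ENNReal.toReal_pos hp hp_top
  have hpow : ∀ᵐ x ∂μ.restrict A, ‖f x‖ₑ ^ p.toReal ≤ K ^ p.toReal := by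
    refine ae_le_of_forall_setLIntegral_le_of_sigmaFinite₀ (hf.enorm.pow_const _)
      fun F hF _ => ?_
    rw [Measure.restrict_restrict hF, setLIntegral_const]
    have hFA := h (F ∩ A) (hF.inter hA) inter_subset_right
    rw [eLpNorm_eq_lintegral_rpow_enorm_toReal hp hp_top,
      one_div, ENNReal.rpow_inv_le_iff hp_pos] at hFA
    rwa [ENNReal.mul_rpow_of_nonneg _ _ hp_pos.le, ← ENNReal.rpow_mul,
      inv_mul_cancel₀ hp_pos.ne', ENNReal.rpow_one] at hFA
  exact hpow.mono fun x hx => (ENNReal.rpow_le_rpow_iff hp_pos).1 hx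

theorem ae_opNorm_le_of_forall_ae {α 𝕜 E F : Type*} [MeasurableSpace α] {μ : Measure α}
    [NontriviallyNormedField 𝕜] [SeminormedAddCommGroup E] [NormedSpace 𝕜 E]
    [TopologicalSpace.SeparableSpace E] [SeminormedAddCommGroup F] [NormedSpace 𝕜 F]
    {L : α → E →L[𝕜] F} {c : ℝ} (hc : 0 ≤ c) (h : ∀ x, ∀ᵐ a ∂μ, ‖L a x‖ ≤ c * ‖x‖) :
    ∀ᵐ a ∂μ, ‖L a‖ ≤ c := by
  obtain ⟨W, hWc, hWd⟩ := TopologicalSpace.exists_countable_dense E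
  filter_upwards [(ae_ball_iff hWc).2 fun x _ => h x] with a ha
  refine (L a).opNorm_le_bound hc fun x => ?_
  have hclosed : IsClosed {x | ‖L a x‖ ≤ c * ‖x‖} :=
    isClosed_le (L a).continuous.norm (continuous_const.mul continuous_norm)
  exact hclosed.closure_subset_iff.2 ha (hWd.closure_eq.symm ▸ mem_univ x)

section MethodOfSteps

variable {d M : ℕ} (η : Fin M → ℝ) (D : Fin M → ℝ → Matrix (Fin d) (Fin d) ℝ)
  (φ : ℝ → Fin d → ℝ)

noncomputable def delayStep (y : ℝ → Fin d → ℝ) (t : ℝ) : Fin d → ℝ :=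
  if t ≤ 0 then φ t else ∑ i, D i t *ᵥ y (t - η i)

/-- The solution with initial condition `φ` by the method of steps: on `(-∞, n e]` the iterates
`delayStep^[m + 1] 0`, `m ≥ n`, all agree, where `e` is a lower bound for the delays. -/
noncomputable def stepsSol (e t : ℝ) : Fin d → ℝ :=
  (delayStep η D φ)^[⌈t / e⌉₊ + 1] 0 t

variable {η D φ}

lemma delayStep_of_nonpos (y : ℝ → Fin d → ℝ) {t : ℝ} (ht : t ≤ 0) :
    delayStep η D φ y t = φ t :=
  if_pos ht

lemma delayStep_of_pos (y : ℝ → Fin d → ℝ) {t : ℝ} (ht : 0 < t) :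
    delayStep η D φ y t = ∑ i, D i t *ᵥ y (t - η i) :=
  if_neg ht.not_ge

lemma measurable_iterate_delayStep (hφ : Measurable φ)
    (hD : ∀ i k l, Measurable fun t => D i t k l) (n : ℕ) :
    Measurable ((delayStep η D φ)^[n] 0) := by
  induction n with
  | zero => exact measurable_const
  | succ n ih =>
    rw [Function.iterate_succ']
    refine Measurable.ite measurableSet_Iic hφ (Finset.measurable_sum _ fun i _ => ?_)
    exact Measurable.matrix_mulVec (hD i) (ih.comp (measurable_id.sub_const _))

lemma ae_norm_delayStep_le {K B L : ℝ} (hφ : ∀ t, ‖φ t‖ ≤ K) (hB : 0 ≤ B)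
    (hD : ∀ᵐ t ∂(volume.restrict (Ici (0 : ℝ))), ∀ i k l, |D i t k l| ≤ B) (hL : 0 ≤ L)
    {y : ℝ → Fin d → ℝ} (hy : ∀ᵐ s, ‖y s‖ ≤ L) :
    ∀ᵐ t, ‖delayStep η D φ y t‖ ≤ K + M * (d * B * L) := by
  have hK : 0 ≤ K := (norm_nonneg _).trans (hφ 0)
  have hy' : ∀ᵐ t, ∀ i, ‖y (t - η i)‖ ≤ L :=
    ae_all_iff.2 fun i => (measurePreserving_sub_right volume (η i)).quasiMeasurePreserving.ae hy
  filter_upwards [hy', (ae_restrict_iff' measurableSet_Ici).1 hD] with t hyt hDt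
  rcases le_or_gt t 0 with ht | ht
  · rw [delayStep_of_nonpos _ ht]
    exact (hφ t).trans (le_add_of_nonneg_right (by positivity))
  · rw [delayStep_of_pos _ ht]
    calc ‖∑ i, D i t *ᵥ y (t - η i)‖ ≤ ∑ i, ‖D i t *ᵥ y (t - η i)‖ := norm_sum_le _ _
      _ ≤ ∑ _i : Fin M, d * B * L := Finset.sum_le_sum fun i _ => by
        refine (norm_mulVec_le_of_abs_le hB (hDt ht.le i) _).trans ?_
        rw [Fintype.card_fin]
        gcongr
        exact hyt i
      _ = M * (d * B * L) := by simp
      _ ≤ K + M * (d * B * L) := le_add_of_nonneg_left hK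

lemma exists_ae_norm_iterate_delayStep_le {K B : ℝ} (hφ : ∀ t, ‖φ t‖ ≤ K) (hB : 0 ≤ B)
    (hD : ∀ᵐ t ∂(volume.restrict (Ici (0 : ℝ))), ∀ i k l, |D i t k l| ≤ B) (n : ℕ) :
    ∃ L, ∀ᵐ t, ‖(delayStep η D φ)^[n] 0 t‖ ≤ L := by
  induction n with
  | zero => exact ⟨0, by simp⟩
  | succ n ih =>
    obtain ⟨L, hL⟩ := ih
    rw [Function.iterate_succ']
    exact ⟨_, ae_norm_delayStep_le hφ hB hD (le_max_right L 0) (hL.mono fun t ht =>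
      ht.trans (le_max_left L 0))⟩

lemma stepsSol_of_nonpos {e t : ℝ} (ht : t ≤ 0) : stepsSol η D φ e t = φ t := by
  rw [stepsSol, Function.iterate_succ_apply', delayStep_of_nonpos _ ht]

section

variable {e : ℝ} (heη : ∀ i, e ≤ η i)
include heη

lemma delayStep_eqOn_Iic {y y' : ℝ → Fin d → ℝ} {τ : ℝ} (h : ∀ s ≤ τ, y s = y' s) :
    ∀ t ≤ τ + e, delayStep η D φ y t = delayStep η D φ y' t := by
  intro t ht
  rcases le_or_gt t 0 with h0 | h0
  · rw [delayStep_of_nonpos _ h0, delayStep_of_nonpos _ h0]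
  · rw [delayStep_of_pos _ h0, delayStep_of_pos _ h0]
    exact Finset.sum_congr rfl fun i _ => by rw [h _ (by linarith [heη i])]

lemma iterate_delayStep_succ_eq (n : ℕ) :
    ∀ t ≤ n * e, (delayStep η D φ)^[n + 2] 0 t = (delayStep η D φ)^[n + 1] 0 t := by
  induction n with
  | zero =>
    intro t ht
    rw [Nat.cast_zero, zero_mul] at ht
    simp only [Function.iterate_succ_apply', delayStep_of_nonpos _ ht]
  | succ n ih =>
    intro t ht
    calc (delayStep η D φ)^[n + 3] 0 t
        = delayStep η D φ ((delayStep η D φ)^[n + 2] 0) t := by rw [Function.iterate_succ_apply']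
      _ = delayStep η D φ ((delayStep η D φ)^[n + 1] 0) t :=
        delayStep_eqOn_Iic heη ih t (by push_cast at ht; linarith)
      _ = (delayStep η D φ)^[n + 2] 0 t := by rw [Function.iterate_succ_apply' _ (n + 1)]

lemma iterate_delayStep_eq_of_le (he : 0 ≤ e) {n m : ℕ} (hnm : n ≤ m) {t : ℝ} (ht : t ≤ n * e) :
    (delayStep η D φ)^[m + 1] 0 t = (delayStep η D φ)^[n + 1] 0 t := by
  induction m, hnm using Nat.le_induction with
  | base => rfl
  | succ m hm ih =>
    rw [iterate_delayStep_succ_eq heη m t (ht.trans (by gcongr)), ih]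

lemma stepsSol_eq_iterate (he : 0 < e) {n : ℕ} {t : ℝ} (ht : t ≤ n * e) :
    stepsSol η D φ e t = (delayStep η D φ)^[n + 1] 0 t := by
  have hceil : t ≤ ⌈t / e⌉₊ * e := (div_le_iff₀ he).1 (Nat.le_ceil _)
  rcases le_total ⌈t / e⌉₊ n with h | h
  · exact (iterate_delayStep_eq_of_le heη he.le h hceil).symm
  · exact iterate_delayStep_eq_of_le heη he.le h ht

lemma stepsSol_of_pos (he : 0 < e) {t : ℝ} (ht : 0 < t) :
    stepsSol η D φ e t = ∑ i, D i t *ᵥ stepsSol η D φ e (t - η i) := by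
  obtain ⟨n, hn⟩ : ∃ n, ⌈t / e⌉₊ = n + 1 := Nat.exists_eq_add_one.2 (Nat.ceil_pos.2 (by positivity))
  have hceil : t ≤ (n + 1) * e := by
    exact_mod_cast hn ▸ (div_le_iff₀ he).1 (Nat.le_ceil (t / e))
  rw [stepsSol, hn, Function.iterate_succ_apply', delayStep_of_pos _ ht]
  refine Finset.sum_congr rfl fun i _ => ?_
  rw [stepsSol_eq_iterate heη he (n := n) (by linarith [heη i])]

end

theorem exists_delaySol_eqOn_Iic (hη : ∀ i, 0 < η i)
    (hDmeas : ∀ i k l, Measurable fun t => D i t k l)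
    (hDbdd : ∀ i, ∃ B : ℝ, ∀ᵐ t ∂(volume.restrict (Ici (0 : ℝ))), ∀ k l, |D i t k l| ≤ B)
    (hφ : Measurable φ) {K : ℝ} (hφK : ∀ t, ‖φ t‖ ≤ K) (ηM : ℝ) (p : ℝ≥0∞) :
    ∃ z, DelaySol d M η D ηM p z ∧ ∀ t ≤ 0, z t = φ t := by
  obtain ⟨e, he, heη⟩ := exists_pos_forall_le_of_pos hη
  obtain ⟨B, hB, hDB⟩ := exists_nonneg_ae_forall_abs_le hDbdd
  refine ⟨stepsSol η D φ e, ⟨fun b => ?_, ?_⟩, fun t ht => stepsSol_of_nonpos ht⟩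
  · set n := ⌈b / e⌉₊
    obtain ⟨L, hL⟩ := exists_ae_norm_iterate_delayStep_le hφK hB hDB (n + 1)
    have heq : (delayStep η D φ)^[n + 1] 0 =ᵐ[volume.restrict (Icc (-ηM) b)] stepsSol η D φ e := by
      filter_upwards [ae_restrict_mem measurableSet_Icc] with t ht
      exact (stepsSol_eq_iterate heη he (ht.2.trans ((div_le_iff₀ he).1 (Nat.le_ceil _)))).symm
    exact (MemLp.of_bound (measurable_iterate_delayStep hφ hDmeas _).aestronglyMeasurable L
      (ae_restrict_of_ae hL)).ae_eq heq
  · rw [← restrict_Ioi_eq_restrict_Ici]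
    filter_upwards [ae_restrict_mem measurableSet_Ioi] with t ht
    exact stepsSol_of_pos heη he ht

end MethodOfSteps

def DelayLpStableWith (d M : ℕ) (η : Fin M → ℝ) (D : Fin M → ℝ → Matrix (Fin d) (Fin d) ℝ)
    (ηM : ℝ) (p : ℝ≥0∞) (C γ : ℝ) : Prop :=
  ∀ z, DelaySol d M η D ηM p z → ∀ t ≥ (0 : ℝ),
    eLpNorm (fun θ => euclNorm (z (t + θ))) p (volume.restrict (Set.Icc (-ηM) 0)) ≤
      ENNReal.ofReal (C * Real.exp (-γ * t)) *
        eLpNorm (fun θ => euclNorm (z θ)) p (volume.restrict (Set.Icc (-ηM) 0))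

def RepresentsDelaySol (d M : ℕ) (η : Fin M → ℝ) (D : Fin M → ℝ → Matrix (Fin d) (Fin d) ℝ)
    (ηM : ℝ) (p : ℝ≥0∞) (σ : ℕ → ℝ) (Mq : ℕ → ℝ → Matrix (Fin d) (Fin d) ℝ) : Prop :=
  ∀ φ : ℝ → Fin d → ℝ, MemLp φ p (volume.restrict (Set.Icc (-ηM) 0)) →
    ∀ z, DelaySol d M η D ηM p z → z =ᵐ[volume.restrict (Set.Icc (-ηM) 0)] φ →
    ∀ᵐ t ∂(volume.restrict (Set.Ici (0 : ℝ))),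
      z t = ∑ᶠ q : ℕ, (Mq q t).mulVec (φ (t - σ q))

section Kernels

variable {d M : ℕ} {η : Fin M → ℝ} {D : Fin M → ℝ → Matrix (Fin d) (Fin d) ℝ} {ηM : ℝ}
  {p : ℝ≥0∞} {σ : ℕ → ℝ} {Mq : ℕ → ℝ → Matrix (Fin d) (Fin d) ℝ}

lemma eLpNorm_restrict_le_of_lpStableWith {C γ : ℝ} (hstab : DelayLpStableWith d M η D ηM p C γ)
    {z : ℝ → Fin d → ℝ} (hz : DelaySol d M η D ηM p z) {s : ℝ} (hs : 0 ≤ s) {E : Set ℝ}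
    (hE : MeasurableSet E) (hEs : E ⊆ Icc (s - ηM) s) :
    eLpNorm (fun t => WithLp.toLp 2 (z t)) p (volume.restrict E) ≤
      ENNReal.ofReal (C * Real.exp (-γ * s)) *
        eLpNorm (fun θ => WithLp.toLp 2 (z θ)) p (volume.restrict (Icc (-ηM) 0)) := by
  have hshift := (measurePreserving_add_left volume s).restrict_preimage hE
  have hsub : (s + ·) ⁻¹' E ⊆ Icc (-ηM) 0 := fun θ hθ =>
    ⟨by linarith [(hEs hθ).1], by linarith [(hEs hθ).2]⟩
  have hstab_s := hstab z hz s hs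
  simp only [euclNorm_eq_norm_toLp, eLpNorm_norm] at hstab_s
  calc eLpNorm (fun t => WithLp.toLp 2 (z t)) p (volume.restrict E)
      = eLpNorm (fun θ => WithLp.toLp 2 (z (s + θ))) p
          (volume.restrict ((s + ·) ⁻¹' E)) := by
        rw [← hshift.map_eq, (measurableEmbedding_addLeft s).eLpNorm_map_measure]
        rfl
    _ ≤ eLpNorm (fun θ => WithLp.toLp 2 (z (s + θ))) p (volume.restrict (Icc (-ηM) 0)) :=
        eLpNorm_mono_measure _ (Measure.restrict_mono hsub le_rfl)
    _ ≤ _ := hstab_s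

lemma ae_eq_kernel_mulVec_of_eq_indicator (hrep : RepresentsDelaySol d M η D ηM p σ Mq)
    {q : ℕ} {g : ℝ} (hgap : ∀ q' ≠ q, g ≤ |σ q' - σ q|) {E : Set ℝ} (hE : MeasurableSet E)
    (hE0 : E ⊆ Ici 0) {lo : ℝ} (hEg : E ⊆ Ioc lo (lo + g)) (v : Fin d → ℝ)
    {z : ℝ → Fin d → ℝ} (hz : DelaySol d M η D ηM p z)
    (hzE : ∀ t ≤ 0, z t = E.indicator (fun _ => v) (σ q + t)) :
    z =ᵐ[volume.restrict E] fun t => Mq q t *ᵥ v := by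
  set φ : ℝ → Fin d → ℝ := fun θ => E.indicator (fun _ => v) (σ q + θ)
  have hφ : MemLp φ p (volume.restrict (Icc (-ηM) 0)) :=
    MemLp.of_bound
      ((measurable_const.indicator hE).comp (measurable_const_add (σ q))).aestronglyMeasurable
      ‖v‖ (ae_of_all _ fun θ => norm_indicator_le_norm_self _ _)
  have hzφ : z =ᵐ[volume.restrict (Icc (-ηM) 0)] φ := by
    filter_upwards [ae_restrict_mem measurableSet_Icc] with θ hθ using hzE θ hθ.2
  filter_upwards [ae_restrict_of_ae_restrict_of_subset hE0 (hrep φ hφ z hz hzφ),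
    ae_restrict_mem hE] with t hzt htE
  rw [hzt, finsum_eq_single _ q fun q' hq' => ?_]
  · simp [φ, htE]
  -- only the delay `σ q` maps `E` into itself, as `E` is shorter than every `|σ q' - σ q|`
  · have hnot : σ q + (t - σ q') ∉ E := fun hmem => (hgap q' hq').not_gt <| by
      have h1 := hEg hmem
      have h2 := hEg htE
      exact abs_sub_lt_iff.2 ⟨by linarith [h1.1, h2.2], by linarith [h1.2, h2.1]⟩
    simp [φ, hnot]

variable (hη : ∀ i, 0 < η i) (hDmeas : ∀ i k l, Measurable fun t => D i t k l)
  (hDbdd : ∀ i, ∃ B : ℝ, ∀ᵐ t ∂(volume.restrict (Ici (0 : ℝ))), ∀ k l, |D i t k l| ≤ B)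
  {C γ : ℝ} (hstab : DelayLpStableWith d M η D ηM p C γ)
  (hrep : RepresentsDelaySol d M η D ηM p σ Mq)
include hη hDmeas hDbdd hstab hrep

lemma eLpNorm_kernel_mulVec_le {q : ℕ} (hσq : 0 ≤ σ q) {g : ℝ}
    (hgap : ∀ q' ≠ q, g ≤ |σ q' - σ q|) {E : Set ℝ} (hE : MeasurableSet E)
    (hER : E ⊆ Ioi 0 ∩ Ioc (σ q - ηM) (σ q)) {lo : ℝ} (hEg : E ⊆ Ioc lo (lo + g))
    (v : Fin d → ℝ) :
    eLpNorm (fun u => WithLp.toLp 2 (Mq q u *ᵥ v)) p (volume.restrict E) ≤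
      ENNReal.ofReal (C * Real.exp (-γ * σ q)) * ‖WithLp.toLp 2 v‖ₑ *
        volume E ^ (1 / p.toReal) := by
  set S := (σ q + ·) ⁻¹' E
  obtain ⟨z, hz, hzE⟩ := exists_delaySol_eqOn_Iic hη hDmeas hDbdd
    ((measurable_const.indicator hE).comp (measurable_const_add (σ q)))
    (fun θ => norm_indicator_le_norm_self (fun _ => v) (σ q + θ)) ηM p
  have hzS : (fun θ => WithLp.toLp 2 (z θ)) =ᵐ[volume.restrict (Icc (-ηM) 0)]
      S.indicator fun _ => WithLp.toLp 2 v := by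
    filter_upwards [ae_restrict_mem measurableSet_Icc] with θ hθ
    by_cases hθE : σ q + θ ∈ E <;> simp [hzE θ hθ.2, S, hθE]
  calc eLpNorm (fun u => WithLp.toLp 2 (Mq q u *ᵥ v)) p (volume.restrict E)
      = eLpNorm (fun u => WithLp.toLp 2 (z u)) p (volume.restrict E) :=
        eLpNorm_congr_ae ((ae_eq_kernel_mulVec_of_eq_indicator hrep hgap hE
          (fun t ht => (mem_Ioi.1 (hER ht).1).le) hEg v hz hzE).fun_comp _).symm
    _ ≤ ENNReal.ofReal (C * Real.exp (-γ * σ q)) *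
          eLpNorm (S.indicator fun _ => WithLp.toLp 2 v) p (volume.restrict (Icc (-ηM) 0)) := by
        rw [← eLpNorm_congr_ae hzS]
        exact eLpNorm_restrict_le_of_lpStableWith hstab hz hσq hE
          fun t ht => ⟨(hER ht).2.1.le, (hER ht).2.2⟩
    _ ≤ ENNReal.ofReal (C * Real.exp (-γ * σ q)) * ‖WithLp.toLp 2 v‖ₑ *
          volume E ^ (1 / p.toReal) := by
        rw [mul_assoc]
        grw [eLpNorm_indicator_const_le, Measure.restrict_apply_le, measure_preimage_add]

lemma ae_specNorm_kernel_le (hp : p ≠ 0) {q : ℕ} (hσq : 0 ≤ σ q) {g : ℝ} (hg : 0 < g)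
    (hgap : ∀ q' ≠ q, g ≤ |σ q' - σ q|) (hMq : ∀ k l, Measurable fun t => Mq q t k l)
    (hC : 0 ≤ C) :
    ∀ᵐ u ∂(volume.restrict (Ioi 0 ∩ Ioc (σ q - ηM) (σ q))),
      specNorm (Mq q u) ≤ C * Real.exp (-γ * σ q) := by
  set R := Ioi 0 ∩ Ioc (σ q - ηM) (σ q)
  have hR : MeasurableSet R := measurableSet_Ioi.inter measurableSet_Ioc
  -- pieces of length `g`, so that `eLpNorm_kernel_mulVec_le` applies to their subsets
  have hcover : R = ⋃ n : ℤ, R ∩ Ioc (n * g) (n * g + g) := by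
    have hunion := iUnion_Ioc_add_zsmul hg 0
    simp only [zero_add, zsmul_eq_mul, Int.cast_add, Int.cast_one, add_mul, one_mul] at hunion
    rw [← inter_iUnion, hunion, inter_univ]
  refine ae_opNorm_le_of_forall_ae (by positivity) fun x => ?_
  rw [hcover, ae_restrict_iUnion_iff]
  intro n
  have hmeas : Measurable fun u => WithLp.toLp 2 (Mq q u *ᵥ WithLp.ofLp x) :=
    (PiLp.continuous_toLp 2 _).measurable.comp (Measurable.matrix_mulVec hMq measurable_const)
  have hbound := ae_restrict_enorm_le_of_forall_eLpNorm_le (A := R ∩ Ioc (n * g) (n * g + g))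
    hp (hR.inter measurableSet_Ioc) hmeas.aestronglyMeasurable fun F hF hFR =>
      eLpNorm_kernel_mulVec_le hη hDmeas hDbdd hstab hrep hσq hgap hF
        (hFR.trans inter_subset_left) (hFR.trans inter_subset_right) (WithLp.ofLp x)
  filter_upwards [hbound] with u hu
  rwa [← ofReal_norm, ← ofReal_norm, ← ENNReal.ofReal_mul (by positivity),
    ENNReal.ofReal_le_ofReal_iff (by positivity), ← Matrix.toEuclideanCLM_toLp,
    WithLp.toLp_ofLp] at hu

end Kernels

/-- If the difference-delay system is `L^p` exponentially stable with
constants `C₀, γ` and `(Mq q)` is a family of `L^∞_loc` kernels supported in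
`(σ q − ηM, σ q]` representing all solutions, then `‖Mq q s‖ ≤ C₀ e^{−γ s}` for a.e.
`s > 0`, where `‖·‖` is the spectral norm. -/
theorem delay_kernel_exponential_decay
    (d M : ℕ)
    (η : Fin M → ℝ) (hηpos : ∀ i, 0 < η i)
    (D : Fin M → ℝ → Matrix (Fin d) (Fin d) ℝ)
    (hDmeas : ∀ i k l, Measurable fun t => D i t k l)
    (hDbdd : ∀ i, ∃ B : ℝ, ∀ᵐ t ∂(volume.restrict (Set.Ici (0 : ℝ))), ∀ k l, |D i t k l| ≤ B)
    (ηM : ℝ)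
    (σ : ℕ → ℝ) (hσ0 : σ 0 = 0) (hσmono : StrictMono σ)
    (p : ℝ≥0∞) (hp : 1 ≤ p)
    (C₀ γ : ℝ) (hC₀ : 0 < C₀) (hγ : 0 < γ)
    -- `L^p` exponential stability with constants `C₀`, `γ`
    (hstab : ∀ z, DelaySol d M η D ηM p z → ∀ t ≥ (0 : ℝ),
      eLpNorm (fun θ => euclNorm (z (t + θ))) p (volume.restrict (Set.Icc (-ηM) 0)) ≤
        ENNReal.ofReal (C₀ * Real.exp (-γ * t)) *
          eLpNorm (fun θ => euclNorm (z θ)) p (volume.restrict (Set.Icc (-ηM) 0)))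
    (Mq : ℕ → ℝ → Matrix (Fin d) (Fin d) ℝ)
    (hMqloc : ∀ q, (∀ k l, Measurable fun t => Mq q t k l) ∧
      ∀ r : ℝ, ∃ B : ℝ, ∀ᵐ t ∂(volume.restrict (Set.Icc (-r) r)), ∀ k l, |Mq q t k l| ≤ B)
    (hMqsupp : ∀ q t, t ∉ Set.Ioc (σ q - ηM) (σ q) → Mq q t = 0)
    (hrep : ∀ φ : ℝ → Fin d → ℝ, MemLp φ p (volume.restrict (Set.Icc (-ηM) 0)) →
      ∀ z, DelaySol d M η D ηM p z → z =ᵐ[volume.restrict (Set.Icc (-ηM) 0)] φ →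
      ∀ᵐ t ∂(volume.restrict (Set.Ici (0 : ℝ))),
        z t = ∑ᶠ q : ℕ, (Mq q t).mulVec (φ (t - σ q))) :
    ∀ q : ℕ, ∀ᵐ s ∂(volume.restrict (Set.Ioi (0 : ℝ))),
      specNorm (Mq q s) ≤ C₀ * Real.exp (-γ * s) := by
  intro q
  obtain ⟨g, hg, hgap⟩ := hσmono.exists_pos_le_abs_sub q
  have hσq : 0 ≤ σ q := hσ0 ▸ hσmono.monotone q.zero_le
  have hsupp := ae_specNorm_kernel_le hηpos hDmeas hDbdd hstab hrep
    (zero_lt_one.trans_le hp).ne' hσq hg hgap (hMqloc q).1 hC₀.le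
  rw [ae_restrict_iff' (measurableSet_Ioi.inter measurableSet_Ioc)] at hsupp
  rw [ae_restrict_iff' measurableSet_Ioi]
  filter_upwards [hsupp] with s hs hs0
  by_cases hsR : s ∈ Ioc (σ q - ηM) (σ q)
  · refine (hs ⟨hs0, hsR⟩).trans ?_
    gcongr C₀ * Real.exp ?_
    exact mul_le_mul_of_nonpos_left hsR.2 (neg_nonpos.2 hγ.le)
  · rw [hMqsupp q s hsR, specNorm, map_zero, norm_zero]
    positivity
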